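/- arXiv:2304.02498 — 8 statements merged into one kernel-verified Lean document; each statement's English description precedes it below -/
import Mathlib

section
/- Let B_1,…,B_p and O_1,…,O_q be two feasible packings of the same MWSBP instance (with the convention B_j := ∅ for j > p and O_j := ∅ for j > q), and let α ≥ 1 be a real number. If for every k ∈ {1,…,q} it holds that w(B_1) + w(B_2) + … + w(B_{⌊αk⌋}) ≥ w(O_1) + w(O_2) + … + w(O_k), then Φ(B_1,…,B_p) ≤ α · Φ(O_1,…,O_q). -/
open Finset

/-- `B 0, …, B (p-1)` (with `B j = ∅` for `j ≥ p`) is a feasible packing of the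
items `Fin n` with sizes `s`: the bins are pairwise disjoint, cover all items,
and each bin has total size at most 1. -/
def IsPacking {n : ℕ} (s : Fin n → ℝ) (p : ℕ) (B : ℕ → Finset (Fin n)) : Prop :=
  (∀ j k, j ≠ k → Disjoint (B j) (B k)) ∧
  (∀ i : Fin n, ∃ j < p, i ∈ B j) ∧
  (∀ j, p ≤ j → B j = ∅) ∧
  (∀ j, ∑ i ∈ B j, s i ≤ 1)

/-- The cost Φ(B₁,…,B_p) = Σ_{k=1}^p k·w(B_k) of a packing (bins indexed from 0 here,
so bin `B j` gets multiplier `j+1`). -/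
def packingCost {n : ℕ} (w : Fin n → ℝ) (p : ℕ) (B : ℕ → Finset (Fin n)) : ℝ :=
  ∑ j ∈ Finset.range p, ((j : ℝ) + 1) * ∑ i ∈ B j, w i


lemma aux_cost (f : ℕ → ℝ) : ∀ N, ∑ m ∈ Finset.range N, ((∑ j ∈ Finset.range N, f j) - ∑ j ∈ Finset.range m, f j) = ∑ j ∈ Finset.range N, ((j:ℝ)+1) * f j := by
  intro N
  induction N with
  | zero => simp
  | succ N ih =>
    simp only [Finset.sum_range_succ]
    have h : ∀ m ∈ Finset.range N, (∑ j ∈ Finset.range N, f j + f N) - ∑ j ∈ Finset.range m, f j = ((∑ j ∈ Finset.range N, f j) - ∑ j ∈ Finset.range m, f j) + f N := by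
      intros; ring
    rw [Finset.sum_congr rfl h, Finset.sum_add_distrib, ih, Finset.sum_const, Finset.card_range]
    ring

lemma aux_abel (A T : ℕ → ℝ) (q : ℕ) (hT : T q = 0) (hA : A 0 = 0) :
    ∑ k ∈ Finset.range q, (A (k+1) - A k) * T k = ∑ k ∈ Finset.range q, A (k+1) * (T k - T (k+1)) := by
  have h : ∑ k ∈ Finset.range q, ((A (k+1) - A k) * T k - A (k+1) * (T k - T (k+1))) = A q * T q - A 0 * T 0 := by
    rw [← Finset.sum_range_sub (fun k => A k * T k) q]
    exact Finset.sum_congr rfl (fun k _ => by ring)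
  rw [Finset.sum_sub_distrib] at h
  rw [hT, hA] at h
  linarith

lemma packing_sum {n : ℕ} (w : Fin n → ℝ) {s : Fin n → ℝ} {p : ℕ} {B : ℕ → Finset (Fin n)}
    (hB : IsPacking s p B) {m : ℕ} (hm : p ≤ m) :
    ∑ j ∈ Finset.range m, ∑ i ∈ B j, w i = ∑ i, w i := by
  rw [← Finset.sum_biUnion (fun j _ k _ hjk => hB.1 j k hjk)]
  congr 1
  ext i
  simp only [Finset.mem_biUnion, Finset.mem_range, Finset.mem_univ, iff_true]
  obtain ⟨j, hj, hij⟩ := hB.2.1 i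
  exact ⟨j, lt_of_lt_of_le hj hm, hij⟩

/-- If the first ⌊αk⌋ bins of `B` always carry at least as much weight as the first `k`
bins of `O`, then Φ(B) ≤ α·Φ(O). -/
theorem stmt_0 {n p q : ℕ} (s w : Fin n → ℝ)
    (hs : ∀ i, 0 < s i ∧ s i ≤ 1) (hw : ∀ i, 0 < w i)
    (B O : ℕ → Finset (Fin n))
    (hB : IsPacking s p B) (hO : IsPacking s q O)
    (α : ℝ) (hα : 1 ≤ α)
    (hyp : ∀ k : ℕ, 1 ≤ k → k ≤ q →
      ∑ j ∈ Finset.range k, ∑ i ∈ O j, w i ≤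
        ∑ j ∈ Finset.range ⌊α * (k : ℝ)⌋₊, ∑ i ∈ B j, w i) :
    packingCost w p B ≤ α * packingCost w q O := by
  classical
  rcases Nat.eq_zero_or_pos n with hn | hn
  · subst hn
    have hB0 : ∀ j : ℕ, (B j : Finset (Fin 0)) = ∅ := fun j => Finset.eq_empty_of_isEmpty _
    have hO0 : ∀ j : ℕ, (O j : Finset (Fin 0)) = ∅ := fun j => Finset.eq_empty_of_isEmpty _
    simp [packingCost, hB0, hO0]
  set f : ℕ → ℝ := fun j => ∑ i ∈ B j, w i with hf
  set g : ℕ → ℝ := fun j => ∑ i ∈ O j, w i with hg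
  set W : ℝ := ∑ i, w i with hWdef
  have hq1 : 1 ≤ q := by
    obtain ⟨j, hj, _⟩ := hO.2.1 ⟨0, hn⟩
    omega
  have hf0 : ∀ j, 0 ≤ f j := fun j => Finset.sum_nonneg (fun i _ => (hw i).le)
  have hg0 : ∀ j, 0 ≤ g j := fun j => Finset.sum_nonneg (fun i _ => (hw i).le)
  set SB : ℕ → ℝ := fun m => ∑ j ∈ Finset.range m, f j with hSB
  set SO : ℕ → ℝ := fun m => ∑ j ∈ Finset.range m, g j with hSO
  have hSBW : ∀ m, p ≤ m → SB m = W := fun m hm => packing_sum w hB hm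
  have hSOW : ∀ m, q ≤ m → SO m = W := fun m hm => packing_sum w hO hm
  have hSBmono : Monotone SB := fun m m' h =>
    Finset.sum_le_sum_of_subset_of_nonneg (Finset.range_subset_range.2 h) (fun j _ _ => hf0 j)
  have hSBle : ∀ m, SB m ≤ W := by
    intro m
    rcases le_total m p with h | h
    · rw [← hSBW p le_rfl]; exact hSBmono h
    · rw [hSBW m h]
  set a : ℕ → ℕ := fun k => ⌊α * (k : ℝ)⌋₊ with ha
  have ha0 : a 0 = 0 := by simp [ha]
  have hamono : Monotone a := by
    intro k k' h
    exact Nat.floor_le_floor (by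
      apply mul_le_mul_of_nonneg_left _ (le_trans zero_le_one hα)
      exact_mod_cast h)
  have hak : ∀ k, (a k : ℝ) ≤ α * k := fun k =>
    Nat.floor_le (mul_nonneg (le_trans zero_le_one hα) (Nat.cast_nonneg k))
  have key : ∀ k, k ≤ q → SO k ≤ SB (a k) := by
    intro k hk
    rcases Nat.eq_zero_or_pos k with rfl | h
    · simp [hSO, hSB, ha0]
    · exact hyp k h hk
  set M := a q with hM
  have hTB0 : ∀ m, M ≤ m → SB m = W := by
    intro m hm
    have h1 : W ≤ SB M := by rw [← hSOW q le_rfl]; exact key q le_rfl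
    have h2 := hSBmono hm
    have h3 := hSBle m
    linarith
  set N := max p M with hN
  have hcostB : packingCost w p B = ∑ m ∈ Finset.range N, (W - SB m) := by
    have h1 : packingCost w p B = ∑ j ∈ Finset.range N, ((j : ℝ) + 1) * f j := by
      rw [packingCost]
      apply Finset.sum_subset (Finset.range_subset_range.2 (le_max_left p M))
      intro j _ hj
      have hpj : p ≤ j := by
        simp only [Finset.mem_range, not_lt] at hj
        exact hj
      simp [hf, hB.2.2.1 j hpj]
    rw [h1, ← aux_cost f N]
    apply Finset.sum_congr rfl
    intro m _
    have : ∑ j ∈ Finset.range N, f j = W := hSBW N (le_max_left p M)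
    rw [this]
  have hcostO : packingCost w q O = ∑ m ∈ Finset.range q, (W - SO m) := by
    rw [packingCost, ← aux_cost g q]
    apply Finset.sum_congr rfl
    intro m _
    have : ∑ j ∈ Finset.range q, g j = W := hSOW q le_rfl
    rw [this]
  have step2 : ∑ m ∈ Finset.range N, (W - SB m) = ∑ m ∈ Finset.range M, (W - SB m) := by
    rw [← Finset.sum_range_add_sum_Ico _ (le_max_right p M)]
    have : ∑ m ∈ Finset.Ico M N, (W - SB m) = 0 := by
      apply Finset.sum_eq_zero
      intro m hm
      rw [hTB0 m (Finset.mem_Ico.1 hm).1]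
      ring
    rw [this, add_zero]
  have step3 : ∀ K : ℕ, ∑ m ∈ Finset.range (a K), (W - SB m)
      = ∑ k ∈ Finset.range K, ∑ m ∈ Finset.Ico (a k) (a (k + 1)), (W - SB m) := by
    intro K
    induction K with
    | zero => simp [ha0]
    | succ K ih =>
      rw [Finset.sum_range_succ, ← ih,
        ← Finset.sum_range_add_sum_Ico _ (hamono (Nat.le_succ K))]
  have step4 : ∀ k, k < q → ∑ m ∈ Finset.Ico (a k) (a (k + 1)), (W - SB m)
      ≤ ((a (k + 1) - a k : ℕ) : ℝ) * (W - SO k) := by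
    intro k hk
    have hcard : (Finset.Ico (a k) (a (k + 1))).card = a (k + 1) - a k := Nat.card_Ico _ _
    have hle : ∀ m ∈ Finset.Ico (a k) (a (k + 1)), W - SB m ≤ W - SO k := by
      intro m hm
      have h1 : SB (a k) ≤ SB m := hSBmono (Finset.mem_Ico.1 hm).1
      have h2 : SO k ≤ SB (a k) := key k (le_of_lt hk)
      linarith
    calc ∑ m ∈ Finset.Ico (a k) (a (k + 1)), (W - SB m)
        ≤ (Finset.Ico (a k) (a (k + 1))).card • (W - SO k) :=
          Finset.sum_le_card_nsmul _ _ _ hle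
      _ = ((a (k + 1) - a k : ℕ) : ℝ) * (W - SO k) := by
          rw [hcard, nsmul_eq_mul]
  have hcast : ∀ k : ℕ, ((a (k + 1) - a k : ℕ) : ℝ) = (a (k + 1) : ℝ) - (a k : ℝ) := by
    intro k
    exact_mod_cast Nat.cast_sub (hamono (Nat.le_succ k))
  have habel : ∑ k ∈ Finset.range q, ((a (k + 1) : ℝ) - (a k : ℝ)) * (W - SO k)
      = ∑ k ∈ Finset.range q, (a (k + 1) : ℝ) * ((W - SO k) - (W - SO (k + 1))) := by
    apply aux_abel (fun k => (a k : ℝ)) (fun k => W - SO k) q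
    · simp [hSOW q le_rfl]
    · simp [ha0]
  have hTdiff : ∀ k : ℕ, (W - SO k) - (W - SO (k + 1)) = g k := by
    intro k
    have : SO (k + 1) = SO k + g k := Finset.sum_range_succ g k
    linarith
  have step6 : ∑ k ∈ Finset.range q, (a (k + 1) : ℝ) * g k
      ≤ ∑ k ∈ Finset.range q, α * ((k : ℝ) + 1) * g k := by
    apply Finset.sum_le_sum
    intro k _
    apply mul_le_mul_of_nonneg_right _ (hg0 k)
    have := hak (k + 1)
    push_cast at this ⊢
    linarith
  calc packingCost w p B
      = ∑ m ∈ Finset.range M, (W - SB m) := by rw [hcostB, step2]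
    _ = ∑ k ∈ Finset.range q, ∑ m ∈ Finset.Ico (a k) (a (k + 1)), (W - SB m) := step3 q
    _ ≤ ∑ k ∈ Finset.range q, ((a (k + 1) - a k : ℕ) : ℝ) * (W - SO k) :=
        Finset.sum_le_sum (fun k hk => step4 k (Finset.mem_range.1 hk))
    _ = ∑ k ∈ Finset.range q, (a (k + 1) : ℝ) * g k := by
        simp_rw [hcast]
        rw [habel]
        exact Finset.sum_congr rfl (fun k _ => by rw [hTdiff k])
    _ ≤ ∑ k ∈ Finset.range q, α * ((k : ℝ) + 1) * g k := step6
    _ = α * packingCost w q O := by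
        rw [packingCost, Finset.mul_sum]
        exact Finset.sum_congr rfl (fun k _ => by ring)
end

section
/- Let p ≥ 2 be an integer and let W_1 ≥ W_2 ≥ … ≥ W_p be real numbers with W_i ∈ (0,1] for all i and W_{p−1} > 2/3, and set S := Σ_{i=1}^p W_i. Then Σ_{i=1}^p i · W_i ≤ (3/4) · S · (S+1). -/
open Finset

/-- If W₁ ≥ … ≥ W_p with Wᵢ ∈ (0,1], p ≥ 2 and W_{p−1} > 2/3, then
Σᵢ i·Wᵢ ≤ (3/4)·S·(S+1) where S = Σᵢ Wᵢ.  (Bins are 0-indexed here, so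
Wᵢ is `W ⟨i-1⟩` and W_{p-1} is `W ⟨p-2⟩`.) -/
theorem stmt_9 {p : ℕ} (hp : 2 ≤ p) (W : Fin p → ℝ)
    (hmono : ∀ i j : Fin p, i ≤ j → W j ≤ W i)
    (hW : ∀ i, 0 < W i ∧ W i ≤ 1)
    (hW2 : 2 / 3 < W ⟨p - 2, by omega⟩) :
    ∑ i : Fin p, ((i : ℝ) + 1) * W i ≤
      (3 / 4) * (∑ i : Fin p, W i) * ((∑ i : Fin p, W i) + 1) := by
  set S := ∑ i : Fin p, W i with hS
  have hp' : (2:ℝ) ≤ (p:ℝ) := by exact_mod_cast hp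
  have hid : ∑ i : Fin p, (i : ℝ) = (p:ℝ) * ((p:ℝ) - 1) / 2 := by
    have h2 := Finset.sum_range_id_mul_two p
    have h3 : (∑ i ∈ Finset.range p, (i:ℝ)) * 2 = (p:ℝ) * ((p:ℝ) - 1) := by
      have := congrArg (Nat.cast : ℕ → ℝ) h2
      push_cast [Nat.cast_sub (by omega : 1 ≤ p)] at this
      linarith
    rw [Fin.sum_univ_eq_sum_range (fun i => (i:ℝ)) p]
    push_cast at h3 ⊢
    linarith
  have key : ∀ i : Fin p, (2/3) * (((p:ℝ) - 1) - (i:ℝ)) ≤ (((p:ℝ) - 1) - (i:ℝ)) * W i := by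
    intro i
    rcases lt_or_ge (i : ℕ) (p - 1) with h | h
    · have hle : i ≤ (⟨p - 2, by omega⟩ : Fin p) := by
        simp only [Fin.le_def]
        omega
      have hWi : 2/3 < W i := lt_of_lt_of_le hW2 (hmono i _ hle)
      have hc : (1:ℝ) ≤ ((p:ℝ) - 1) - (i:ℝ) := by
        have : (i:ℕ) + 2 ≤ p := by omega
        have : ((i:ℕ):ℝ) + 2 ≤ (p:ℝ) := by exact_mod_cast this
        linarith
      nlinarith
    · have hi : (i:ℕ) = p - 1 := by omega
      have : ((i:ℕ):ℝ) = (p:ℝ) - 1 := by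
        rw [hi]; push_cast [Nat.cast_sub (by omega : 1 ≤ p)]; ring
      rw [this]
      ring_nf
      simp
  have hsum : ∑ i : Fin p, (2/3) * (((p:ℝ) - 1) - (i:ℝ)) ≤
      ∑ i : Fin p, (((p:ℝ) - 1) - (i:ℝ)) * W i :=
    Finset.sum_le_sum (fun i _ => key i)
  have h1 : ∑ i : Fin p, (2/3) * (((p:ℝ) - 1) - (i:ℝ)) = (p:ℝ)*((p:ℝ)-1)/3 := by
    rw [← Finset.mul_sum, Finset.sum_sub_distrib, hid, Finset.sum_const,
      Finset.card_univ, Fintype.card_fin]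
    push_cast
    ring
  have expand : ∑ i : Fin p, ((i:ℝ) + 1) * W i
      = (p:ℝ) * S - ∑ i : Fin p, (((p:ℝ) - 1) - (i:ℝ)) * W i := by
    rw [hS, Finset.mul_sum, ← Finset.sum_sub_distrib]
    apply Finset.sum_congr rfl
    intro i _
    ring
  rw [expand]
  rw [h1] at hsum
  nlinarith [sq_nonneg (6*S - 4*(p:ℝ) + 3), hp', hsum]
end

section
/- Let O_1,…,O_q be a finite sequence of pairwise disjoint finite sets with nonnegative item weights and suppose w(O_k) ≤ 1 for every k (for instance, a feasible packing of an MWSBP instance in which w_i = s_i for all items). Let S := Σ_{k=1}^q w(O_k), x := ⌊S⌋ and f := S − x. Then Σ_{k=1}^q k · w(O_k) ≥ Σ_{i=1}^x i + f·(x+1) ≥ S·(S+1)/2. -/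
open Finset

lemma gauss_Icc (n : ℕ) : ∑ i ∈ Icc 1 n, (i : ℝ) = n * (n + 1) / 2 := by
  induction n with
  | zero => simp
  | succ n ih =>
    rw [Finset.sum_Icc_succ_top (by omega)]
    rw [ih]; push_cast; ring

lemma gauss_range (n : ℕ) : ∑ i ∈ range n, (i : ℝ) = n * ((n : ℝ) - 1) / 2 := by
  induction n with
  | zero => simp
  | succ n ih => rw [Finset.sum_range_succ, ih]; push_cast; ring

lemma swap_sum (q : ℕ) (a : ℕ → ℝ) :
    ∑ k ∈ range q, ((k : ℝ) + 1) * a k = ∑ j ∈ range q, ∑ k ∈ Ico j q, a k := by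
  rw [range_eq_Ico, Finset.sum_Ico_Ico_comm]
  refine Finset.sum_congr rfl fun k _ => ?_
  rw [Finset.sum_const, Nat.card_Ico, Nat.sub_zero, nsmul_eq_mul]
  push_cast; ring

lemma key (q : ℕ) (a : ℕ → ℝ) (h0 : ∀ k, 0 ≤ a k) (h1 : ∀ k, a k ≤ 1) (S : ℝ)
    (hS : S = ∑ k ∈ range q, a k) (x : ℕ) (hx : x = ⌊S⌋₊) :
    ((x : ℝ) + 1) * S - x * ((x : ℝ) + 1) / 2 ≤ ∑ k ∈ range q, ((k : ℝ) + 1) * a k := by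
  have hS0 : 0 ≤ S := hS ▸ Finset.sum_nonneg fun k _ => h0 k
  have hxS : (x : ℝ) ≤ S := hx ▸ Nat.floor_le hS0
  have hSq : S ≤ q := by
    rw [hS]
    calc ∑ k ∈ range q, a k ≤ ∑ k ∈ range q, 1 := Finset.sum_le_sum fun k _ => h1 k
      _ = q := by simp
  rw [swap_sum]
  have hT : ∀ j ∈ range q, max (S - j) 0 ≤ ∑ k ∈ Ico j q, a k := by
    intro j hj
    have hnn : (0:ℝ) ≤ ∑ k ∈ Ico j q, a k := Finset.sum_nonneg fun k _ => h0 k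
    have hmain : S - j ≤ ∑ k ∈ Ico j q, a k := by
      have hsplit : ∑ k ∈ range j, a k + ∑ k ∈ Ico j q, a k = S := by
        simp only [hS, range_eq_Ico]
        exact Finset.sum_Ico_consecutive _ (Nat.zero_le j) (le_of_lt (mem_range.mp hj))
      have hhead : ∑ k ∈ range j, a k ≤ j := by
        calc ∑ k ∈ range j, a k ≤ ∑ k ∈ range j, 1 := Finset.sum_le_sum fun k _ => h1 k
          _ = j := by simp
      linarith
    exact max_le hmain hnn
  have hstep : ∑ j ∈ range q, max (S - j) 0 ≤ ∑ j ∈ range q, ∑ k ∈ Ico j q, a k :=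
    Finset.sum_le_sum hT
  refine le_trans ?_ hstep
  by_cases hcase : x + 1 ≤ q
  · have hsub : ∑ j ∈ range (x+1), max (S - j) 0 ≤ ∑ j ∈ range q, max (S - j) 0 :=
      Finset.sum_le_sum_of_subset_of_nonneg (Finset.range_subset_range.mpr hcase)
        (fun j _ _ => le_max_right _ _)
    have heq : ∑ j ∈ range (x+1), max (S - j) 0 = ∑ j ∈ range (x+1), (S - (j:ℝ)) := by
      refine Finset.sum_congr rfl fun j hj => max_eq_left ?_
      have hjx : (j : ℝ) ≤ x := by
        exact_mod_cast Nat.lt_succ_iff.mp (mem_range.mp hj)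
      linarith
    have hval : ∑ j ∈ range (x+1), (S - (j:ℝ)) = ((x:ℝ)+1) * S - ∑ j ∈ range (x+1), (j:ℝ) := by
      rw [Finset.sum_sub_distrib, Finset.sum_const, Finset.card_range, nsmul_eq_mul]
      push_cast; ring
    rw [gauss_range] at hval
    have : ∑ j ∈ range (x+1), (S - (j:ℝ)) = ((x:ℝ)+1) * S - (x:ℝ) * ((x:ℝ)+1) / 2 := by
      rw [hval]; push_cast; ring
    linarith
  · have hq : (q : ℝ) ≤ x := by exact_mod_cast Nat.lt_succ_iff.mp (Nat.lt_of_not_le hcase)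
    have e1 : S = q := le_antisymm hSq (le_trans hq hxS)
    have e2 : (x : ℝ) = q := le_antisymm (by linarith) hq
    have heq : ∑ j ∈ range q, max (S - j) 0 = ∑ j ∈ range q, (S - (j:ℝ)) := by
      refine Finset.sum_congr rfl fun j hj => max_eq_left ?_
      have : (j : ℝ) < q := by exact_mod_cast mem_range.mp hj
      linarith
    have hval : ∑ j ∈ range q, (S - (j:ℝ)) = (q:ℝ) * S - ∑ j ∈ range q, (j:ℝ) := by
      rw [Finset.sum_sub_distrib, Finset.sum_const, Finset.card_range, nsmul_eq_mul]
    rw [gauss_range] at hval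
    have hgoal : ((x:ℝ)+1) * S - (x:ℝ) * ((x:ℝ)+1) / 2 = (q:ℝ) * S - (q:ℝ) * ((q:ℝ) - 1) / 2 := by
      rw [e1, e2]; ring
    linarith

/-- For pairwise disjoint finite sets O₁,…,O_q with nonnegative item weights and
w(O_k) ≤ 1 for all k, with S = Σ_k w(O_k), x = ⌊S⌋ and f = S − x, it holds
Σ_k k·w(O_k) ≥ Σ_{i=1}^x i + f·(x+1) ≥ S·(S+1)/2.
(Bins are 0-indexed here, so bin `O k` has multiplier `k+1`.) -/
theorem stmt_10 {ι : Type*} [DecidableEq ι] {q : ℕ} (w : ι → ℝ) (hw : ∀ i, 0 ≤ w i)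
    (O : Fin q → Finset ι)
    (hdisj : ∀ j k, j ≠ k → Disjoint (O j) (O k))
    (hO1 : ∀ k, ∑ i ∈ O k, w i ≤ 1) :
    ((∑ i ∈ Finset.Icc 1 ⌊∑ k : Fin q, ∑ i ∈ O k, w i⌋₊, (i : ℝ)) +
        ((∑ k : Fin q, ∑ i ∈ O k, w i) - (⌊∑ k : Fin q, ∑ i ∈ O k, w i⌋₊ : ℝ)) *
          ((⌊∑ k : Fin q, ∑ i ∈ O k, w i⌋₊ : ℝ) + 1) ≤
      ∑ k : Fin q, ((k : ℝ) + 1) * ∑ i ∈ O k, w i) ∧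
    ((∑ k : Fin q, ∑ i ∈ O k, w i) * ((∑ k : Fin q, ∑ i ∈ O k, w i) + 1) / 2 ≤
      (∑ i ∈ Finset.Icc 1 ⌊∑ k : Fin q, ∑ i ∈ O k, w i⌋₊, (i : ℝ)) +
        ((∑ k : Fin q, ∑ i ∈ O k, w i) - (⌊∑ k : Fin q, ∑ i ∈ O k, w i⌋₊ : ℝ)) *
          ((⌊∑ k : Fin q, ∑ i ∈ O k, w i⌋₊ : ℝ) + 1)) := by
  classical
  set a : ℕ → ℝ := fun n => if h : n < q then ∑ i ∈ O ⟨n, h⟩, w i else 0 with ha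
  have h0 : ∀ n, 0 ≤ a n := by
    intro n
    simp only [ha]
    split
    · exact Finset.sum_nonneg fun i _ => hw i
    · exact le_refl 0
  have h1 : ∀ n, a n ≤ 1 := by
    intro n
    simp only [ha]
    split
    · exact hO1 _
    · norm_num
  have hconv : ∑ k : Fin q, ∑ i ∈ O k, w i = ∑ n ∈ range q, a n := by
    rw [← Fin.sum_univ_eq_sum_range]
    refine Finset.sum_congr rfl fun k _ => ?_
    simp [ha, k.isLt]
  have hconv2 : ∑ k : Fin q, ((k : ℝ) + 1) * ∑ i ∈ O k, w i
      = ∑ n ∈ range q, ((n : ℝ) + 1) * a n := by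
    rw [← Fin.sum_univ_eq_sum_range (fun n => ((n : ℝ) + 1) * a n)]
    refine Finset.sum_congr rfl fun k _ => ?_
    simp [ha, k.isLt]
  rw [hconv, hconv2]
  set S : ℝ := ∑ n ∈ range q, a n with hSdef
  set x : ℕ := ⌊S⌋₊ with hxdef
  have hS0 : 0 ≤ S := Finset.sum_nonneg fun k _ => h0 k
  have hxS : (x : ℝ) ≤ S := Nat.floor_le hS0
  have hSx : S < (x : ℝ) + 1 := Nat.lt_floor_add_one S
  have hkey := key q a h0 h1 S hSdef x hxdef
  rw [gauss_Icc]
  constructor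
  · nlinarith [hkey]
  · nlinarith [mul_nonneg (sub_nonneg.mpr hxS) (by linarith : (0:ℝ) ≤ (x:ℝ) + 1 - S)]
end

section
/- Let r ≥ 1 and t ≥ 0 be integers, let α ∈ [1/2, 2/3], and set y' := (2/3, …, 2/3, α) ∈ ℝ^r (all first r−1 coordinates equal to 2/3) and x' := (α, …, α) ∈ ℝ^t. If (2/3)(r−1) + α ≤ (1−α)·t, then R(y', x') ≤ H1(α,r,t) := 3(1−α)·(3α(t+1)(2r+t) + 2r(r−1)) / (3α + 4r² + (6α−2)r + 9(1−α)α·t(t+1) − 2). Otherwise (if (2/3)(r−1) + α > (1−α)·t), R(y', x') ≤ H2(α,r,t) := (6r(r−1) + 9α(t+1)(2r+t)) / ((2r + 3α(t+1) − 2)·(2r + 3α(t+1) + 1)). -/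
open Finset

/-- A(y,x) = Σ_{i=1}^r i·yᵢ + Σ_{i=1}^s (r+i)·xᵢ (vectors are 1-indexed functions ℕ → ℝ). -/
noncomputable def Afun (r s : ℕ) (y x : ℕ → ℝ) : ℝ :=
  ∑ i ∈ Finset.Icc 1 r, (i : ℝ) * y i + ∑ i ∈ Finset.Icc 1 s, ((r : ℝ) + (i : ℝ)) * x i

/-- ℓ : the smallest positive integer with Σ_{i=1}^r yᵢ ≤ Σ_{i=1}^ℓ (1−xᵢ); under the
standing hypotheses (0 ≤ xᵢ < 1, xᵢ = 0 eventually, Σ yᵢ > 0) this is the unique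
positive integer with Σ_{i=1}^{ℓ−1}(1−xᵢ) < Σ_{i=1}^r yᵢ ≤ Σ_{i=1}^ℓ(1−xᵢ). -/
noncomputable def ellfun (r : ℕ) (y x : ℕ → ℝ) : ℕ :=
  sInf {l : ℕ | 0 < l ∧ ∑ i ∈ Finset.Icc 1 r, y i ≤ ∑ i ∈ Finset.Icc 1 l, (1 - x i)}

/-- B(y,x) = ℓ(ℓ−1)/2 + (x_ℓ+ρ)·ℓ + Σ_{i=ℓ+1}^s i·xᵢ, where
ρ = Σ_{i=1}^r yᵢ − Σ_{i=1}^{ℓ−1}(1−xᵢ). -/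
noncomputable def Bfun (r s : ℕ) (y x : ℕ → ℝ) : ℝ :=
  (ellfun r y x : ℝ) * ((ellfun r y x : ℝ) - 1) / 2 +
    (x (ellfun r y x) +
      (∑ i ∈ Finset.Icc 1 r, y i - ∑ i ∈ Finset.Icc 1 (ellfun r y x - 1), (1 - x i))) *
      (ellfun r y x : ℝ) +
    ∑ i ∈ Finset.Icc (ellfun r y x + 1) s, (i : ℝ) * x i

/-- R(y,x) = A(y,x)/B(y,x). -/
noncomputable def Rfun (r s : ℕ) (y x : ℕ → ℝ) : ℝ := Afun r s y x / Bfun r s y x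

private lemma gauss_sum (n : ℕ) : ∑ i ∈ Finset.Icc 1 n, (i:ℝ) = n*(n+1)/2 := by
  induction n with
  | zero => simp
  | succ n ih =>
    rw [Finset.sum_Icc_succ_top (by omega)]
    push_cast
    rw [ih]; ring

set_option maxHeartbeats 2000000 in
/-- Claim 3 of the paper: for y' = (2/3,…,2/3,α) ∈ ℝ^r, x' = (α,…,α) ∈ ℝ^t with
α ∈ [1/2,2/3]: if (2/3)(r−1)+α ≤ (1−α)t then R(y',x') ≤ H₁(α,r,t), and otherwise
R(y',x') ≤ H₂(α,r,t). -/
theorem stmt_12 (r t : ℕ) (hr : 1 ≤ r) (α : ℝ) (hα1 : 1 / 2 ≤ α) (hα2 : α ≤ 2 / 3) :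
    ((2 / 3) * ((r : ℝ) - 1) + α ≤ (1 - α) * (t : ℝ) →
      Rfun r t (fun i => if i = r then α else 2 / 3)
          (fun i => if 1 ≤ i ∧ i ≤ t then α else 0) ≤
        3 * (1 - α) * (3 * α * ((t : ℝ) + 1) * (2 * (r : ℝ) + (t : ℝ)) +
            2 * (r : ℝ) * ((r : ℝ) - 1)) /
          (3 * α + 4 * (r : ℝ) ^ 2 + (6 * α - 2) * (r : ℝ) +
            9 * (1 - α) * α * (t : ℝ) * ((t : ℝ) + 1) - 2)) ∧
    ((1 - α) * (t : ℝ) < (2 / 3) * ((r : ℝ) - 1) + α →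
      Rfun r t (fun i => if i = r then α else 2 / 3)
          (fun i => if 1 ≤ i ∧ i ≤ t then α else 0) ≤
        (6 * (r : ℝ) * ((r : ℝ) - 1) + 9 * α * ((t : ℝ) + 1) * (2 * (r : ℝ) + (t : ℝ))) /
          ((2 * (r : ℝ) + 3 * α * ((t : ℝ) + 1) - 2) *
            (2 * (r : ℝ) + 3 * α * ((t : ℝ) + 1) + 1))) := by
  have h1α : (0:ℝ) < 1 - α := by linarith
  have hα0 : (0:ℝ) < α := by linarith
  have hr1 : (1:ℝ) ≤ (r:ℝ) := by exact_mod_cast hr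
  have ht0 : (0:ℝ) ≤ (t:ℝ) := Nat.cast_nonneg t
  set y : ℕ → ℝ := fun i => if i = r then α else 2/3 with hy
  set x : ℕ → ℝ := fun i => if 1 ≤ i ∧ i ≤ t then α else 0 with hxd
  have hsplit_r : Finset.Icc 1 r = insert r (Finset.Icc 1 (r-1)) := by
    ext i; simp only [Finset.mem_Icc, Finset.mem_insert]; omega
  have hrnm : r ∉ Finset.Icc 1 (r-1) := by simp only [Finset.mem_Icc]; omega
  have hcr : ((r - 1 : ℕ) : ℝ) = (r:ℝ) - 1 := by
    rw [Nat.cast_sub hr, Nat.cast_one]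
  have hSy : ∑ i ∈ Finset.Icc 1 r, y i = 2/3*((r:ℝ)-1) + α := by
    rw [hsplit_r, Finset.sum_insert hrnm]
    have h1 : ∀ i ∈ Finset.Icc 1 (r-1), y i = 2/3 := by
      intro i hi; simp only [Finset.mem_Icc] at hi
      simp only [hy]; rw [if_neg (by omega)]
    rw [Finset.sum_congr rfl h1, Finset.sum_const, Nat.card_Icc]
    simp only [hy, if_true]
    rw [show r - 1 + 1 - 1 = r - 1 from by omega, nsmul_eq_mul, hcr]; ring
  have hxval : ∀ i, 1 ≤ i → i ≤ t → x i = α := by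
    intro i h1 h2; simp only [hxd]; rw [if_pos ⟨h1, h2⟩]
  have hxzero : ∀ i, t < i → x i = 0 := by
    intro i h; simp only [hxd]; rw [if_neg (by omega)]
  have hFle : ∀ l, l ≤ t → ∑ i ∈ Finset.Icc 1 l, (1 - x i) = (1-α)*(l:ℝ) := by
    intro l hl
    have h1 : ∀ i ∈ Finset.Icc 1 l, (1 : ℝ) - x i = 1 - α := by
      intro i hi; simp only [Finset.mem_Icc] at hi
      rw [hxval i hi.1 (hi.2.trans hl)]
    rw [Finset.sum_congr rfl h1, Finset.sum_const, Nat.card_Icc]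
    rw [show l + 1 - 1 = l from by omega, nsmul_eq_mul]; ring
  have hFge : ∀ l, t ≤ l → ∑ i ∈ Finset.Icc 1 l, (1 - x i) = (l:ℝ) - α*(t:ℝ) := by
    intro l hl
    have hu : Finset.Icc 1 l = Finset.Icc 1 t ∪ Finset.Icc (t+1) l := by
      ext i; simp only [Finset.mem_Icc, Finset.mem_union]; omega
    have hd : Disjoint (Finset.Icc 1 t) (Finset.Icc (t+1) l) := by
      rw [Finset.disjoint_left]; intro i hi hj
      simp only [Finset.mem_Icc] at hi hj; omega
    rw [hu, Finset.sum_union hd, hFle t le_rfl]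
    have h1 : ∀ i ∈ Finset.Icc (t+1) l, (1:ℝ) - x i = 1 := by
      intro i hi; simp only [Finset.mem_Icc] at hi
      rw [hxzero i (by omega)]; ring
    rw [Finset.sum_congr rfl h1, Finset.sum_const, Nat.card_Icc]
    rw [show l + 1 - (t+1) = l - t from by omega, nsmul_eq_mul, Nat.cast_sub hl]
    ring
  have hSpos : (0:ℝ) < 2/3*((r:ℝ)-1) + α := by nlinarith
  set L := ellfun r y x with hLdef
  have hLsInf : L = sInf {l : ℕ | 0 < l ∧
      ∑ i ∈ Finset.Icc 1 r, y i ≤ ∑ i ∈ Finset.Icc 1 l, (1 - x i)} := hLdef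
  have hLmem : 0 < L ∧ ∑ i ∈ Finset.Icc 1 r, y i ≤ ∑ i ∈ Finset.Icc 1 L, (1 - x i) := by
    have : L ∈ {l : ℕ | 0 < l ∧
        ∑ i ∈ Finset.Icc 1 r, y i ≤ ∑ i ∈ Finset.Icc 1 l, (1 - x i)} := by
      rw [hLsInf]
      apply Nat.sInf_mem
      refine ⟨t + r + 1, by omega, ?_⟩
      rw [hSy, hFge _ (by omega)]
      push_cast; nlinarith
    exact this
  obtain ⟨hL0, hLub⟩ := hLmem
  rw [hSy] at hLub
  have hLlb : ∑ i ∈ Finset.Icc 1 (L-1), (1 - x i) < 2/3*((r:ℝ)-1) + α := by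
    rcases Nat.lt_or_ge L 2 with h | h
    · have hL1 : L = 1 := by omega
      rw [hL1]
      rw [show (1:ℕ) - 1 = 0 from rfl, show Finset.Icc 1 0 = (∅ : Finset ℕ) from
        Finset.Icc_eq_empty (by omega), Finset.sum_empty]
      exact hSpos
    · have hnm : L - 1 ∉ {l : ℕ | 0 < l ∧
          ∑ i ∈ Finset.Icc 1 r, y i ≤ ∑ i ∈ Finset.Icc 1 l, (1 - x i)} := by
        exact Nat.notMem_of_lt_sInf (by rw [← hLsInf]; omega)
      simp only [Set.mem_setOf_eq, not_and, not_le] at hnm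
      have := hnm (by omega)
      rwa [hSy] at this
  have hcL : ((L - 1 : ℕ) : ℝ) = (L:ℝ) - 1 := by rw [Nat.cast_sub hL0, Nat.cast_one]
  have hA : Afun r t y x = (r:ℝ)*((r:ℝ)-1)/3 + (r:ℝ)*α
      + α*((r:ℝ)*(t:ℝ) + (t:ℝ)*((t:ℝ)+1)/2) := by
    unfold Afun
    have h1 : ∑ i ∈ Finset.Icc 1 r, (i:ℝ) * y i = (r:ℝ)*((r:ℝ)-1)/3 + (r:ℝ)*α := by
      rw [hsplit_r, Finset.sum_insert hrnm]
      have h2 : ∀ i ∈ Finset.Icc 1 (r-1), (i:ℝ) * y i = (2/3) * (i:ℝ) := by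
        intro i hi; simp only [Finset.mem_Icc] at hi
        simp only [hy]; rw [if_neg (by omega)]; ring
      rw [Finset.sum_congr rfl h2, ← Finset.mul_sum, gauss_sum, hcr]
      simp only [hy, if_true]; ring
    have h3 : ∑ i ∈ Finset.Icc 1 t, ((r:ℝ) + (i:ℝ)) * x i
        = α*((r:ℝ)*(t:ℝ) + (t:ℝ)*((t:ℝ)+1)/2) := by
      have h4 : ∀ i ∈ Finset.Icc 1 t, ((r:ℝ) + (i:ℝ)) * x i = α*(r:ℝ) + α*(i:ℝ) := by
        intro i hi; simp only [Finset.mem_Icc] at hi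
        rw [hxval i hi.1 hi.2]; ring
      rw [Finset.sum_congr rfl h4, Finset.sum_add_distrib, Finset.sum_const, Nat.card_Icc,
        ← Finset.mul_sum, gauss_sum]
      rw [show t + 1 - 1 = t from by omega, nsmul_eq_mul]
      ring
    rw [h1, h3]
  have hApos : (0:ℝ) < (r:ℝ)*((r:ℝ)-1)/3 + (r:ℝ)*α
      + α*((r:ℝ)*(t:ℝ) + (t:ℝ)*((t:ℝ)+1)/2) := by
    have h1 : (0:ℝ) ≤ (r:ℝ)*((r:ℝ)-1) := by nlinarith
    have h2 : (0:ℝ) ≤ α*((r:ℝ)*(t:ℝ)) := by positivity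
    have h3 : (0:ℝ) ≤ α*((t:ℝ)*((t:ℝ)+1)/2) := by positivity
    nlinarith
  refine ⟨fun hc => ?_, fun hc => ?_⟩
  · -- Case 1 : S ≤ (1-α) t
    have htpos : 0 < t := by
      rcases Nat.eq_zero_or_pos t with h | h
      · exfalso; rw [h] at hc; push_cast at hc; nlinarith
      · exact h
    have hLt : L ≤ t := by
      rw [hLsInf]
      exact Nat.sInf_le ⟨htpos, by rw [hSy, hFle t le_rfl]; exact hc⟩
    have hu2 : 2/3*((r:ℝ)-1) + α ≤ (1-α)*(L:ℝ) := by rw [← hFle L hLt]; exact hLub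
    have hu1 : (1-α)*((L:ℝ)-1) < 2/3*((r:ℝ)-1) + α := by
      rw [← hcL, ← hFle (L-1) (by omega)]; exact hLlb
    have htail : ∑ i ∈ Finset.Icc (L+1) t, (i:ℝ) * x i
        = α*((t:ℝ)*((t:ℝ)+1)/2 - (L:ℝ)*((L:ℝ)+1)/2) := by
      have h4 : ∀ i ∈ Finset.Icc (L+1) t, (i:ℝ) * x i = α * (i:ℝ) := by
        intro i hi; simp only [Finset.mem_Icc] at hi
        rw [hxval i (by omega) hi.2]; ring
      rw [Finset.sum_congr rfl h4, ← Finset.mul_sum]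
      have h5 : ∑ i ∈ Finset.Icc (L+1) t, (i:ℝ)
          = (t:ℝ)*((t:ℝ)+1)/2 - (L:ℝ)*((L:ℝ)+1)/2 := by
        have hu : Finset.Icc 1 t = Finset.Icc 1 L ∪ Finset.Icc (L+1) t := by
          ext i; simp only [Finset.mem_Icc, Finset.mem_union]; omega
        have hd : Disjoint (Finset.Icc 1 L) (Finset.Icc (L+1) t) := by
          rw [Finset.disjoint_left]; intro i hi hj
          simp only [Finset.mem_Icc] at hi hj; omega
        have hg := gauss_sum t
        rw [hu, Finset.sum_union hd, gauss_sum] at hg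
        linarith
      rw [h5]
    have hB : Bfun r t y x = (L:ℝ)*((L:ℝ)-1)/2
        + (α + ((2/3*((r:ℝ)-1)+α) - (1-α)*((L:ℝ)-1)))*(L:ℝ)
        + α*((t:ℝ)*((t:ℝ)+1)/2 - (L:ℝ)*((L:ℝ)+1)/2) := by
      unfold Bfun
      rw [← hLdef, hSy, hFle (L-1) (by omega), hcL, hxval L hL0 hLt, htail]
    have hP : ((1-α)*(L:ℝ) - (2/3*((r:ℝ)-1)+α)) * ((1-α)*((L:ℝ)-1) - (2/3*((r:ℝ)-1)+α))
        ≤ 0 :=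
      mul_nonpos_of_nonneg_of_nonpos (by linarith) (by linarith)
    have hkey : 18*(1-α) * ((L:ℝ)*((L:ℝ)-1)/2
          + (α + ((2/3*((r:ℝ)-1)+α) - (1-α)*((L:ℝ)-1)))*(L:ℝ)
          + α*((t:ℝ)*((t:ℝ)+1)/2 - (L:ℝ)*((L:ℝ)+1)/2))
        = (3*α + 4*(r:ℝ)^2 + (6*α-2)*(r:ℝ) + 9*(1-α)*α*(t:ℝ)*((t:ℝ)+1) - 2)
          - 9*(((1-α)*(L:ℝ) - (2/3*((r:ℝ)-1)+α))
              * ((1-α)*((L:ℝ)-1) - (2/3*((r:ℝ)-1)+α))) := by ring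
    have hBlb : 3*α + 4*(r:ℝ)^2 + (6*α-2)*(r:ℝ) + 9*(1-α)*α*(t:ℝ)*((t:ℝ)+1) - 2
        ≤ 18*(1-α) * Bfun r t y x := by
      rw [hB, hkey]; linarith
    have hDpos : (0:ℝ) < 3*α + 4*(r:ℝ)^2 + (6*α-2)*(r:ℝ)
        + 9*(1-α)*α*(t:ℝ)*((t:ℝ)+1) - 2 := by
      have h1 : (0:ℝ) ≤ 9*(1-α)*α*(t:ℝ)*((t:ℝ)+1) :=
        mul_nonneg (mul_nonneg (mul_nonneg (by linarith) hα0.le) ht0) (by linarith)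
      nlinarith [mul_nonneg (by linarith : (0:ℝ) ≤ (r:ℝ)-1) (by linarith : (0:ℝ) ≤ (r:ℝ))]
    have hBpos : 0 < Bfun r t y x := by
      by_contra h; push_neg at h
      have h2 : 18*(1-α)*Bfun r t y x ≤ 0 :=
        mul_nonpos_of_nonneg_of_nonpos (by linarith) h
      linarith
    rw [Rfun, div_le_div_iff₀ hBpos hDpos, hA]
    have h6 := mul_le_mul_of_nonneg_left hBlb hApos.le
    refine le_trans h6 (le_of_eq ?_)
    ring
  · -- Case 2 : (1-α) t < S
    have htL : t < L := by
      by_contra h; push_neg at h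
      rw [hFle L h] at hLub
      have h2 : (L:ℝ) ≤ (t:ℝ) := by exact_mod_cast h
      nlinarith
    have hσ2 : 2/3*((r:ℝ)-1) + α ≤ (L:ℝ) - α*(t:ℝ) := by
      rw [← hFge L (by omega)]; exact hLub
    have hσ1 : (L:ℝ) - 1 - α*(t:ℝ) < 2/3*((r:ℝ)-1) + α := by
      have := hLlb
      rw [hFge (L-1) (by omega), hcL] at this
      linarith
    have hB : Bfun r t y x = (L:ℝ)*((L:ℝ)-1)/2
        + ((2/3*((r:ℝ)-1)+α) - ((L:ℝ)-1-α*(t:ℝ)))*(L:ℝ) := by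
      unfold Bfun
      rw [← hLdef, hSy, hFge (L-1) (by omega), hcL, hxzero L htL,
        show Finset.Icc (L+1) t = (∅ : Finset ℕ) from Finset.Icc_eq_empty (by omega),
        Finset.sum_empty]
      ring
    have hP : ((L:ℝ) - (2/3*((r:ℝ)-1)+α+α*(t:ℝ)))
        * ((L:ℝ) - 1 - (2/3*((r:ℝ)-1)+α+α*(t:ℝ))) ≤ 0 :=
      mul_nonpos_of_nonneg_of_nonpos (by linarith) (by linarith)
    have hkey : 18 * ((L:ℝ)*((L:ℝ)-1)/2
          + ((2/3*((r:ℝ)-1)+α) - ((L:ℝ)-1-α*(t:ℝ)))*(L:ℝ))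
        = (2*(r:ℝ)+3*α*((t:ℝ)+1)-2)*(2*(r:ℝ)+3*α*((t:ℝ)+1)+1)
          - 9*(((L:ℝ) - (2/3*((r:ℝ)-1)+α+α*(t:ℝ)))
              * ((L:ℝ) - 1 - (2/3*((r:ℝ)-1)+α+α*(t:ℝ)))) := by ring
    have hBlb : (2*(r:ℝ)+3*α*((t:ℝ)+1)-2)*(2*(r:ℝ)+3*α*((t:ℝ)+1)+1)
        ≤ 18 * Bfun r t y x := by
      rw [hB, hkey]; linarith
    have hDpos : (0:ℝ) < (2*(r:ℝ)+3*α*((t:ℝ)+1)-2)*(2*(r:ℝ)+3*α*((t:ℝ)+1)+1) := by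
      have h1 : (0:ℝ) < 2*(r:ℝ)+3*α*((t:ℝ)+1)-2 := by nlinarith
      have h2 : (0:ℝ) < 2*(r:ℝ)+3*α*((t:ℝ)+1)+1 := by nlinarith
      exact mul_pos h1 h2
    have hBpos : 0 < Bfun r t y x := by
      by_contra h; push_neg at h
      have : 18*Bfun r t y x ≤ 0 := by linarith
      linarith
    rw [Rfun, div_le_div_iff₀ hBpos hDpos, hA]
    have h6 := mul_le_mul_of_nonneg_left hBlb hApos.le
    refine le_trans h6 (le_of_eq ?_)
    ring
end

section
/- For all real numbers α ∈ [1/2, 2/3], r ≥ 1 and t with 0 ≤ t ≤ ((2/3)(r−1) + α)/(1−α), it holds that H2(α,r,t) ≤ 13/8, where H2(α,r,t) := (6r(r−1) + 9α(t+1)(2r+t)) / ((2r + 3α(t+1) − 2)·(2r + 3α(t+1) + 1)). -/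
/-- Claim 4 of the paper: for α ∈ [1/2,2/3], r ≥ 1 and 0 ≤ t ≤ ((2/3)(r−1)+α)/(1−α),
H₂(α,r,t) = (6r(r−1) + 9α(t+1)(2r+t)) / ((2r+3α(t+1)−2)(2r+3α(t+1)+1)) ≤ 13/8. -/
theorem stmt_13 (α r t : ℝ) (hα1 : 1 / 2 ≤ α) (hα2 : α ≤ 2 / 3)
    (hr : 1 ≤ r) (ht0 : 0 ≤ t) (ht : t ≤ ((2 / 3) * (r - 1) + α) / (1 - α)) :
    (6 * r * (r - 1) + 9 * α * (t + 1) * (2 * r + t)) /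
      ((2 * r + 3 * α * (t + 1) - 2) * (2 * r + 3 * α * (t + 1) + 1)) ≤ 13 / 8 := by
  have h1α : (0:ℝ) < 1 - α := by linarith
  have ht' : t * (1 - α) ≤ (2 / 3) * (r - 1) + α := by
    have := (le_div_iff₀ h1α).mp ht
    linarith
  -- key: 3t ≤ 2r + s - 2 with s = 3α(t+1)
  have hkey : 3 * t ≤ 2 * r + 3 * α * (t + 1) - 2 := by nlinarith
  have hs1 : 3 / 2 * (t + 1) ≤ 3 * α * (t + 1) := by nlinarith
  have hs2 : 3 * α * (t + 1) ≤ 2 * (t + 1) := by nlinarith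
  have hd1 : (0:ℝ) < 2 * r + 3 * α * (t + 1) - 2 := by nlinarith
  have hd2 : (0:ℝ) < 2 * r + 3 * α * (t + 1) + 1 := by nlinarith
  rw [div_le_div_iff₀ (by positivity) (by norm_num)]
  nlinarith [mul_nonneg (sub_nonneg.2 hs1) (sub_nonneg.2 hkey),
    mul_nonneg (sub_nonneg.2 hs2) (sub_nonneg.2 hkey),
    mul_nonneg (sub_nonneg.2 hs1) (sub_nonneg.2 hs2),
    mul_nonneg (sub_nonneg.2 hr) (sub_nonneg.2 hkey),
    mul_nonneg (sub_nonneg.2 hr) (sub_nonneg.2 hs2),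
    mul_nonneg (sub_nonneg.2 hr) (sub_nonneg.2 hr),
    mul_nonneg ht0 (sub_nonneg.2 hkey), mul_nonneg ht0 (sub_nonneg.2 hs2),
    sq_nonneg (r - 1), sq_nonneg (2*r - 3*α*(t+1)), sq_nonneg t]
end

section
/- For all real numbers α ∈ [1/2, 2/3], r ≥ 1 and t ≥ 0, it holds that H1(α,r,t) ≤ H1(1/2,r,t) = 3·(4r² + r(6t+2) + 3t(t+1)) / (16r² + 4r + 9t² + 9t − 2), where H1(α,r,t) := 3(1−α)·(3α(t+1)(2r+t) + 2r(r−1)) / (3α + 4r² + (6α−2)r + 9(1−α)α·t(t+1) − 2). -/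
/-- Claim 5 of the paper: for α ∈ [1/2,2/3], r ≥ 1 and t ≥ 0,
H₁(α,r,t) ≤ H₁(1/2,r,t) = 3(4r² + r(6t+2) + 3t(t+1)) / (16r² + 4r + 9t² + 9t − 2),
where H₁(α,r,t) = 3(1−α)(3α(t+1)(2r+t) + 2r(r−1)) /
(3α + 4r² + (6α−2)r + 9(1−α)α·t(t+1) − 2). -/
theorem stmt_14 (α r t : ℝ) (hα1 : 1 / 2 ≤ α) (hα2 : α ≤ 2 / 3)
    (hr : 1 ≤ r) (ht : 0 ≤ t) :
    3 * (1 - α) * (3 * α * (t + 1) * (2 * r + t) + 2 * r * (r - 1)) /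
        (3 * α + 4 * r ^ 2 + (6 * α - 2) * r + 9 * (1 - α) * α * t * (t + 1) - 2) ≤
      3 * (4 * r ^ 2 + r * (6 * t + 2) + 3 * t * (t + 1)) /
        (16 * r ^ 2 + 4 * r + 9 * t ^ 2 + 9 * t - 2) ∧
    3 * (1 - (1 / 2 : ℝ)) * (3 * (1 / 2) * (t + 1) * (2 * r + t) + 2 * r * (r - 1)) /
        (3 * (1 / 2) + 4 * r ^ 2 + (6 * (1 / 2) - 2) * r +
          9 * (1 - (1 / 2)) * (1 / 2) * t * (t + 1) - 2) =
      3 * (4 * r ^ 2 + r * (6 * t + 2) + 3 * t * (t + 1)) /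
        (16 * r ^ 2 + 4 * r + 9 * t ^ 2 + 9 * t - 2) := by
  have h1a : (0:ℝ) ≤ 1 - α := by linarith
  have h0a : (0:ℝ) ≤ α := by linarith
  have ht1 : (0:ℝ) ≤ t + 1 := by linarith
  have htt : 0 ≤ 9 * (1 - α) * α * t * (t + 1) := by positivity
  have hD : 0 < 3 * α + 4 * r ^ 2 + (6 * α - 2) * r + 9 * (1 - α) * α * t * (t + 1) - 2 := by
    nlinarith
  have hDh : 0 < 16 * r ^ 2 + 4 * r + 9 * t ^ 2 + 9 * t - 2 := by nlinarith
  constructor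
  · rw [div_le_div_iff₀ hD hDh]
    nlinarith [sq_nonneg (α - 1/2), sq_nonneg (2*α - 1), mul_nonneg ht ht,
      mul_nonneg (mul_nonneg ht ht) ht, sq_nonneg (r - 1), sq_nonneg (r*t - 1),
      mul_nonneg (sub_nonneg.2 hα1) (sub_nonneg.2 hα2),
      mul_nonneg (mul_nonneg (sub_nonneg.2 hα1) (sub_nonneg.2 hα2)) ht,
      mul_nonneg (mul_nonneg (sub_nonneg.2 hα1) (sub_nonneg.2 hα2)) (mul_nonneg ht ht),
      mul_nonneg (sub_nonneg.2 hα1) (sub_nonneg.2 hr),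
      mul_nonneg (mul_nonneg (sub_nonneg.2 hα1) (sub_nonneg.2 hr)) ht,
      mul_nonneg (mul_nonneg (sub_nonneg.2 hα1) (sub_nonneg.2 hr)) (sub_nonneg.2 hr)]
  · have hD2 : (3 * (1/2 : ℝ) + 4 * r ^ 2 + (6 * (1/2) - 2) * r +
        9 * (1 - (1/2)) * (1/2) * t * (t + 1) - 2) ≠ 0 := by nlinarith
    have hDh' := ne_of_gt hDh
    rw [div_eq_div_iff hD2 hDh']
    ring
end

section
/- For all real numbers u ≥ 0 and t ≥ 0, it holds that R1(u,t) := 3·(6 + 3t² + 10u + 4u² + 9t + 6ut) / (18 + 9t + 9t² + 36u + 16u²) ≤ (7+√37)/8. -/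
/-- For all u, t ≥ 0:
R₁(u,t) = 3(6 + 3t² + 10u + 4u² + 9t + 6ut) / (18 + 9t + 9t² + 36u + 16u²) ≤ (7+√37)/8. -/
theorem stmt_15 (u t : ℝ) (hu : 0 ≤ u) (ht : 0 ≤ t) :
    3 * (6 + 3 * t ^ 2 + 10 * u + 4 * u ^ 2 + 9 * t + 6 * u * t) /
        (18 + 9 * t + 9 * t ^ 2 + 36 * u + 16 * u ^ 2) ≤
      (7 + Real.sqrt 37) / 8 := by
  set s := Real.sqrt 37 with hsdef
  have hs2 : s ^ 2 = 37 := Real.sq_sqrt (by norm_num)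
  have hs0 : (0 : ℝ) ≤ s := Real.sqrt_nonneg 37
  have hD : (0 : ℝ) < 18 + 9 * t + 9 * t ^ 2 + 36 * u + 16 * u ^ 2 := by positivity
  have key : (s + 1) * ((7 + s) * (18 + 9 * t + 9 * t ^ 2 + 36 * u + 16 * u ^ 2) -
      24 * (6 + 3 * t ^ 2 + 10 * u + 4 * u ^ 2 + 9 * t + 6 * u * t)) =
      (4 * (s + 1) * u - 18 * t + (4 * s - 5)) ^ 2 + 4 * (s + 13) * (s + 1) * u +
        (31 + 40 * s) := by
    linear_combination (9 * t ^ 2 + 9 * t + 2) * hs2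
  have hs1 : (0 : ℝ) < s + 1 := by linarith
  have hE : 0 ≤ (7 + s) * (18 + 9 * t + 9 * t ^ 2 + 36 * u + 16 * u ^ 2) -
      24 * (6 + 3 * t ^ 2 + 10 * u + 4 * u ^ 2 + 9 * t + 6 * u * t) := by
    have h1 : 0 ≤ (4 * (s + 1) * u - 18 * t + (4 * s - 5)) ^ 2 := sq_nonneg _
    have h2 : 0 ≤ 4 * (s + 13) * (s + 1) * u := by positivity
    nlinarith [key, h1, h2, hs0, mul_pos hs1 hs1]
  rw [div_le_div_iff₀ hD (by norm_num)]
  linarith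
end

section
/- The supremum of R1(u,t) := 3·(6 + 3t² + 10u + 4u² + 9t + 6ut) / (18 + 9t + 9t² + 36u + 16u²) over all real numbers u ≥ 0 and t ≥ 0 equals (7+√37)/8; in particular, for every ε > 0 there exist nonnegative integers u and t with R1(u,t) > (7+√37)/8 − ε. -/
/-- R₁(u,t) = 3(6 + 3t² + 10u + 4u² + 9t + 6ut) / (18 + 9t + 9t² + 36u + 16u²). -/
noncomputable def R1 (u t : ℝ) : ℝ :=
  3 * (6 + 3 * t ^ 2 + 10 * u + 4 * u ^ 2 + 9 * t + 6 * u * t) /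
    (18 + 9 * t + 9 * t ^ 2 + 36 * u + 16 * u ^ 2)

lemma R1_key (u t s ε : ℝ) (hs : s^2 = 37) (hs6 : 6 < s) (hs7 : s < 7)
    (ht0 : 0 ≤ t) (h1 : t ≤ (2+2*s)/9 * u) (h2 : (2+2*s)/9 * u < t + 1)
    (hu1 : 1 ≤ u) (hεu : 27 ≤ ε * u) :
    ((7 + s)/8 - ε) * (18 + 9 * t + 9 * t ^ 2 + 36 * u + 16 * u ^ 2) <
      3 * (6 + 3 * t ^ 2 + 10 * u + 4 * u ^ 2 + 9 * t + 6 * u * t) := by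
  have hu0 : (0:ℝ) ≤ u := by linarith
  set δ : ℝ := (2+2*s)/9 * u - t with hδdef
  have hδ0 : 0 ≤ δ := by simp [hδdef]; linarith
  have hδ1 : δ < 1 := by simp [hδdef]; linarith
  have hQ : 9*(s-1)*t^2 - 144*u*t + 16*(s+1)*u^2 = 9*(s-1)*δ^2 := by
    simp only [hδdef]; linear_combination (4*t*u - 4*(s+1)*u^2/9) * hs
  have hT : (9*s-153)*((2+2*s)/9) = 40 - 32*s := by linear_combination 2*hs
  have hε : 0 < ε := by nlinarith
  nlinarith [hQ, hT, mul_nonneg (sub_nonneg.2 hεu) (sub_nonneg.2 hu1),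
    mul_nonneg (sub_nonneg.2 hεu) hu0,
    mul_nonneg (mul_nonneg hδ0 (sub_nonneg.2 hδ1.le)) (by linarith : (0:ℝ) ≤ s - 1),
    mul_nonneg hδ0 (by linarith : (0:ℝ) ≤ 153 - 9*s),
    mul_nonneg hδ0 (by linarith : (0:ℝ) ≤ s - 1),
    mul_pos hε (by positivity : (0:ℝ) < 9*t + 9*t^2 + 36*u)]

lemma R1_ub (u t : ℝ) (hu : 0 ≤ u) (ht : 0 ≤ t) : R1 u t ≤ (7 + Real.sqrt 37) / 8 := by
  have hs : (Real.sqrt 37) ^ 2 = 37 := Real.sq_sqrt (by norm_num)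
  have hs6 : 6 < Real.sqrt 37 := by
    nlinarith [Real.sqrt_nonneg 37]
  have hs7 : Real.sqrt 37 < 7 := by
    nlinarith [Real.sqrt_nonneg 37]
  set s := Real.sqrt 37
  have hD : 0 < 18 + 9 * t + 9 * t ^ 2 + 36 * u + 16 * u ^ 2 := by
    nlinarith [sq_nonneg t, sq_nonneg u]
  rw [R1, div_le_div_iff₀ hD (by norm_num)]
  nlinarith [sq_nonneg (3*(s-1)*t - 24*u), sq_nonneg (3*(s-1)*t - 24*u - 24),
    mul_nonneg hu ht, mul_nonneg hu hu, mul_nonneg ht ht,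
    mul_nonneg (mul_nonneg hu ht) ht, mul_nonneg (sub_nonneg.2 hs6.le) ht,
    mul_nonneg (sub_nonneg.2 hs6.le) hu, sq_nonneg (t-1), sq_nonneg (u-1)]

lemma R1_approx (ε : ℝ) (hε : 0 < ε) :
    ∃ u t : ℕ, (7 + Real.sqrt 37) / 8 - ε < R1 (u : ℝ) (t : ℝ) := by
  have hs : (Real.sqrt 37) ^ 2 = 37 := Real.sq_sqrt (by norm_num)
  have hs6 : 6 < Real.sqrt 37 := by nlinarith [Real.sqrt_nonneg 37]
  have hs7 : Real.sqrt 37 < 7 := by nlinarith [Real.sqrt_nonneg 37]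
  set s := Real.sqrt 37
  set u : ℕ := ⌈27/ε⌉₊ + 1 with hudef
  have hu1 : (1:ℝ) ≤ (u:ℝ) := by exact_mod_cast Nat.one_le_iff_ne_zero.2 (by simp [hudef])
  have hεu : 27 ≤ ε * u := by
    have h27 : 27/ε ≤ (u:ℝ) := le_trans (Nat.le_ceil _) (by exact_mod_cast Nat.le_succ _)
    calc 27 = ε * (27/ε) := by field_simp
    _ ≤ ε * u := by exact mul_le_mul_of_nonneg_left h27 hε.le
  have hLu : 0 ≤ (2+2*s)/9 * (u:ℝ) := by positivity
  set t : ℕ := ⌊(2+2*s)/9 * (u:ℝ)⌋₊ with htdef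
  have h1 : (t:ℝ) ≤ (2+2*s)/9 * (u:ℝ) := Nat.floor_le hLu
  have h2 : (2+2*s)/9 * (u:ℝ) < (t:ℝ) + 1 := Nat.lt_floor_add_one _
  refine ⟨u, t, ?_⟩
  have hD : 0 < 18 + 9 * (t:ℝ) + 9 * (t:ℝ) ^ 2 + 36 * (u:ℝ) + 16 * (u:ℝ) ^ 2 := by
    positivity
  rw [R1, lt_div_iff₀ hD]
  exact R1_key (u:ℝ) (t:ℝ) s ε hs hs6 hs7 (Nat.cast_nonneg t) h1 h2 hu1 hεu

/-- The supremum of R₁(u,t) over u, t ≥ 0 equals (7+√37)/8; in particular, for every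
ε > 0 there are nonnegative integers u, t with R₁(u,t) > (7+√37)/8 − ε. -/
theorem stmt_16 :
    IsLUB {z : ℝ | ∃ u t : ℝ, 0 ≤ u ∧ 0 ≤ t ∧ z = R1 u t} ((7 + Real.sqrt 37) / 8) ∧
      ∀ ε : ℝ, 0 < ε → ∃ u t : ℕ,
        (7 + Real.sqrt 37) / 8 - ε < R1 (u : ℝ) (t : ℝ) := by
  refine ⟨⟨?_, ?_⟩, fun ε hε => R1_approx ε hε⟩
  · rintro z ⟨u, t, hu, ht, rfl⟩
    exact R1_ub u t hu ht
  · intro b hb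
    by_contra h
    push_neg at h
    obtain ⟨u, t, hut⟩ := R1_approx ((7 + Real.sqrt 37) / 8 - b) (by linarith)
    have hmem : R1 (u:ℝ) (t:ℝ) ∈ {z : ℝ | ∃ u t : ℝ, 0 ≤ u ∧ 0 ≤ t ∧ z = R1 u t} :=
      ⟨u, t, Nat.cast_nonneg u, Nat.cast_nonneg t, rfl⟩
    have := hb hmem
    linarith
end
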